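/- Let n ≥ 1 and α ∈ ℝ, and let B = B(x₀, R) be an open ball in ℝ^n with |x₀| < 3R (a ball of type II). Then there is a constant c > 0 depending only on n and α such that ∫_B |y|^α dy ≥ c R^{α+n}. Moreover, if −n < α < ∞, there is also C > 0 depending only on n and α such that ∫_B |y|^α dy ≤ C R^{α+n}. -/

import Mathlib

open MeasureTheory Real Filter
open scoped ENNReal NNReal Topology

noncomputable section

namespace HardyHenon

/-- `n`-dimensional Euclidean space. -/
abbrev E (n : ℕ) : Type := EuclideanSpace ℝ (Fin n)

/-- Axis-parallel cube with corner `a` and side length `h`. -/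
def cube (n : ℕ) (a : Fin n → ℝ) (h : ℝ) : Set (E n) :=
  {x | ∀ i, a i ≤ x i ∧ x i ≤ a i + h}

/-- Average `⟨f⟩_Q` over a cube (as an extended nonnegative real, via the lower integral). -/
def cubeAvg (n : ℕ) (f : E n → ℝ) (a : Fin n → ℝ) (h : ℝ) : ℝ≥0∞ :=
  (volume (cube n a h))⁻¹ * ∫⁻ x in cube n a h, ENNReal.ofReal (f x)

/-- The heat flow `e^{tΔ} f (x) = (4πt)^{-n/2} ∫ e^{-|x-y|²/(4t)} f(y) dy`. -/
def heatFlow (n : ℕ) (t : ℝ) (f : E n → ℝ) (x : E n) : ℝ :=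
  (4 * π * t) ^ (-(n : ℝ) / 2) * ∫ y, Real.exp (-‖x - y‖ ^ 2 / (4 * t)) * f y

/-- The condition `⟨|f|⟩_Q → 0` as `|Q| → ∞`. -/
def AvgDecay (n : ℕ) (f : E n → ℝ) : Prop :=
  ∀ ε : ℝ, 0 < ε → ∃ M : ℝ, ∀ (a : Fin n → ℝ) (h : ℝ), 0 < h → M ≤ h ^ n →
    cubeAvg n (fun x => |f x|) a h ≤ ENNReal.ofReal ε

/-- The two-weight constant `[σ, w]_{A^α_{p,q}}
  = sup_Q |Q|^{α/n - (1/p - 1/q)} ⟨σ⟩_Q^{1/p'} ⟨w⟩_Q^{1/q}`. -/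
def twoWeightConst (n : ℕ) (p q α : ℝ) (σ w : E n → ℝ) : ℝ≥0∞ :=
  ⨆ (a : Fin n → ℝ) (h : ℝ) (_ : 0 < h),
    volume (cube n a h) ^ (α / n - (1 / p - 1 / q)) *
      cubeAvg n σ a h ^ (1 - 1 / p) * cubeAvg n w a h ^ (1 / q)

/-- The Hardy–Littlewood maximal function (over axis-parallel cubes). -/
def maximal (n : ℕ) (f : E n → ℝ) (x : E n) : ℝ≥0∞ :=
  ⨆ (a : Fin n → ℝ) (h : ℝ) (_ : 0 < h) (_ : x ∈ cube n a h),
    cubeAvg n (fun y => |f y|) a h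

/-- The Fujii–Wilson `A_∞` constant `|w|_{A_∞} = sup_Q w(Q)⁻¹ ∫_Q M(χ_Q w)`. -/
def fujiiWilson (n : ℕ) (w : E n → ℝ) : ℝ≥0∞ :=
  ⨆ (a : Fin n → ℝ) (h : ℝ) (_ : 0 < h),
    (∫⁻ x in cube n a h, ENNReal.ofReal (w x))⁻¹ *
      ∫⁻ x in cube n a h, maximal n ((cube n a h).indicator w) x

/-- Membership in the Fujii–Wilson `A_∞` class (for a weight, i.e. a nonnegative
locally integrable function). -/
def MemAinfty (n : ℕ) (w : E n → ℝ) : Prop :=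
  (∀ x, 0 ≤ w x) ∧ LocallyIntegrable w volume ∧ fujiiWilson n w ≠ ⊤

/-- The Muckenhoupt `A_p` constant `[w]_{A_p} = sup_Q ⟨w⟩_Q ⟨w^{1-p'}⟩_Q^{p-1}`. -/
def apConst (n : ℕ) (p : ℝ) (w : E n → ℝ) : ℝ≥0∞ :=
  ⨆ (a : Fin n → ℝ) (h : ℝ) (_ : 0 < h),
    cubeAvg n w a h * cubeAvg n (fun x => w x ^ (1 - p / (p - 1))) a h ^ (p - 1)

/-- Membership in the Muckenhoupt class `A_p`. -/
def MemAp (n : ℕ) (p : ℝ) (w : E n → ℝ) : Prop :=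
  (∀ x, 0 ≤ w x) ∧ LocallyIntegrable w volume ∧ apConst n p w ≠ ⊤

/-- The Morrey norm `‖f‖_{M^{1/rinv}_q} = sup_Q |Q|^{rinv - 1/q} ‖f‖_{L^q(Q)}`;
here `rinv` is the reciprocal of the first Morrey exponent. -/
def morreyNorm (n : ℕ) (rinv q : ℝ) (f : E n → ℝ) : ℝ≥0∞ :=
  ⨆ (a : Fin n → ℝ) (h : ℝ) (_ : 0 < h),
    volume (cube n a h) ^ (rinv - 1 / q) *
      eLpNorm f (ENNReal.ofReal q) (volume.restrict (cube n a h))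

/-- The weighted measure `σ dx`. -/
def wMeasure (n : ℕ) (σ : E n → ℝ) : Measure (E n) :=
  volume.withDensity fun x => ENNReal.ofReal (σ x)

/-- `u` is a mild solution of `∂ₜu - Δu = V uᵗ`, `u(0) = u₀`, belonging to
`C([0,T); L^p(σ))`. -/
def IsMildSolution (n : ℕ) (p : ℝ) (σ V : E n → ℝ) (τ T : ℝ)
    (u₀ : E n → ℝ) (u : ℝ → E n → ℝ) : Prop :=
  (∀ t, 0 ≤ t → t < T → MemLp (u t) (ENNReal.ofReal p) (wMeasure n σ)) ∧
  (∀ t₀, 0 ≤ t₀ → t₀ < T →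
    Tendsto (fun t => eLpNorm (fun x => u t x - u t₀ x) (ENNReal.ofReal p) (wMeasure n σ))
      (nhdsWithin t₀ (Set.Ico 0 T)) (nhds 0)) ∧
  (∀ᵐ x ∂(volume : Measure (E n)), u 0 x = u₀ x) ∧
  (∀ t, 0 < t → t < T → ∀ᵐ x ∂(volume : Measure (E n)),
    u t x = heatFlow n t u₀ x +
      ∫ s in Set.Ioo (0 : ℝ) t, heatFlow n (t - s) (fun y => V y * u s y ^ τ) x)

/-- `u` is a global mild solution of `∂ₜu - Δu = V uᵗ`, `u(0) = u₀`, belonging to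
`C([0,∞); L^p(σ))`. -/
def IsGlobalMildSolution (n : ℕ) (p : ℝ) (σ V : E n → ℝ) (τ : ℝ)
    (u₀ : E n → ℝ) (u : ℝ → E n → ℝ) : Prop :=
  (∀ t, 0 ≤ t → MemLp (u t) (ENNReal.ofReal p) (wMeasure n σ)) ∧
  (∀ t₀, 0 ≤ t₀ →
    Tendsto (fun t => eLpNorm (fun x => u t x - u t₀ x) (ENNReal.ofReal p) (wMeasure n σ))
      (nhdsWithin t₀ (Set.Ici 0)) (nhds 0)) ∧
  (∀ᵐ x ∂(volume : Measure (E n)), u 0 x = u₀ x) ∧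
  (∀ t, 0 < t → ∀ᵐ x ∂(volume : Measure (E n)),
    u t x = heatFlow n t u₀ x +
      ∫ s in Set.Ioo (0 : ℝ) t, heatFlow n (t - s) (fun y => V y * u s y ^ τ) x)

end HardyHenon

open HardyHenon

/-!
On `ball x₀ R \ ball 0 (R / 2)`, which carries at least half the Haar measure of `ball x₀ R`
in positive dimension, the norm lies between `R / 2` and `(κ + 1) R` when `‖x₀‖ < κ R`; this gives
the lower bound. For the upper bound, `ball x₀ R ⊆ ball 0 ((κ + 1) R)`, and by homogeneity of Haar
measure the integral of `‖y‖ ^ α` over `ball 0 r` is `r ^ (α + d)` times its value over the unit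
ball, which is finite for `α > -d` and positive by the lower bound.
-/

open Metric Module

theorem Real.min_rpow_le_rpow {a b t : ℝ} (α : ℝ) (ha : 0 < a) (hat : a ≤ t) (htb : t ≤ b) :
    min (a ^ α) (b ^ α) ≤ t ^ α := by
  rcases le_total 0 α with hα | hα
  · exact (min_le_left _ _).trans (rpow_le_rpow ha.le hat hα)
  · exact (min_le_right _ _).trans (rpow_le_rpow_of_nonpos (ha.trans_le hat) htb hα)

theorem ball_subset_ball_zero_of_norm_lt {F : Type*} [SeminormedAddCommGroup F] {x₀ : F}
    {κ R : ℝ} (hx₀ : ‖x₀‖ < κ * R) : ball x₀ R ⊆ ball 0 ((κ + 1) * R) :=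
  ball_subset_ball' (by rw [dist_zero_right]; linarith)

section AddHaar

variable {F : Type*} [NormedAddCommGroup F] [NormedSpace ℝ F] [FiniteDimensional ℝ F]
  [MeasurableSpace F] [BorelSpace F] (μ : Measure F) [μ.IsAddHaarMeasure]

theorem ofReal_pow_div_two_mul_addHaar_unitBall_le (hd : 1 ≤ finrank ℝ F) (x y : F) {r : ℝ}
    (hr : 0 < r) :
    ENNReal.ofReal (r ^ finrank ℝ F / 2) * μ (ball 0 1) ≤ μ (ball x r \ ball y (r / 2)) := by
  have h_half : (r / 2) ^ finrank ℝ F ≤ r ^ finrank ℝ F / 2 := by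
    rw [div_pow]
    gcongr
    exact le_self_pow₀ one_le_two (by omega)
  calc ENNReal.ofReal (r ^ finrank ℝ F / 2) * μ (ball 0 1)
      ≤ ENNReal.ofReal (r ^ finrank ℝ F - (r / 2) ^ finrank ℝ F) * μ (ball 0 1) := by
        gcongr
        linarith
    _ = μ (ball x r) - μ (ball y (r / 2)) := by
        rw [Measure.addHaar_ball_of_pos μ x hr, Measure.addHaar_ball_of_pos μ y (by positivity),
          ← ENNReal.sub_mul (fun _ _ => measure_ball_lt_top.ne),
          ENNReal.ofReal_sub _ (by positivity)]
    _ ≤ μ (ball x r \ ball y (r / 2)) := le_measure_sdiff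

theorem setLIntegral_ball_zero_norm_rpow {r : ℝ} (hr : 0 < r) (α : ℝ) :
    ∫⁻ y in ball 0 r, ENNReal.ofReal (‖y‖ ^ α) ∂μ =
      ENNReal.ofReal (r ^ (α + finrank ℝ F)) * ∫⁻ y in ball 0 1, ENNReal.ofReal (‖y‖ ^ α) ∂μ := by
  have h_preimage : (r • ·) ⁻¹' ball (0 : F) r = ball 0 1 := by
    ext y
    simp [norm_smul, abs_of_pos hr, hr]
  have h_scaled :
      ENNReal.ofReal |(r ^ finrank ℝ F)⁻¹| * ∫⁻ y in ball 0 r, ENNReal.ofReal (‖y‖ ^ α) ∂μ =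
        ENNReal.ofReal (r ^ α) * ∫⁻ y in ball 0 1, ENNReal.ofReal (‖y‖ ^ α) ∂μ := by
    rw [← smul_eq_mul, ← setLIntegral_smul_measure, ← Measure.map_addHaar_smul μ hr.ne',
      setLIntegral_map measurableSet_ball (by fun_prop) (by fun_prop), h_preimage,
      ← lintegral_const_mul' _ _ ENNReal.ofReal_ne_top]
    refine setLIntegral_congr_fun measurableSet_ball fun y _ => ?_
    rw [norm_smul, Real.norm_of_nonneg hr.le, mul_rpow hr.le (norm_nonneg _),
      ENNReal.ofReal_mul (by positivity)]
  calc ∫⁻ y in ball 0 r, ENNReal.ofReal (‖y‖ ^ α) ∂μ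
      = ENNReal.ofReal (r ^ finrank ℝ F) * (ENNReal.ofReal |(r ^ finrank ℝ F)⁻¹| *
          ∫⁻ y in ball 0 r, ENNReal.ofReal (‖y‖ ^ α) ∂μ) := by
        rw [← mul_assoc, ← ENNReal.ofReal_mul (by positivity), abs_of_pos (by positivity),
          mul_inv_cancel₀ (by positivity), ENNReal.ofReal_one, one_mul]
    _ = _ := by
        rw [h_scaled, ← mul_assoc, ← ENNReal.ofReal_mul (by positivity), ← rpow_natCast,
          ← rpow_add hr, add_comm]

theorem setLIntegral_unitBall_norm_rpow_lt_top (hd : 1 ≤ finrank ℝ F) {α : ℝ}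
    (hα : -(finrank ℝ F : ℝ) < α) :
    ∫⁻ y in ball 0 1, ENNReal.ofReal (‖y‖ ^ α) ∂μ < ∞ :=
  (integrableOn_ball_of_norm_le_rpow (C := 1) (α := -α) hd (by linarith)
    (.of_forall fun y => by simp [abs_of_nonneg (rpow_nonneg (norm_nonneg y) α)])
    (measurable_norm.pow_const α).aestronglyMeasurable).lintegral_lt_top

theorem exists_pos_le_setLIntegral_ball_norm_rpow (hd : 1 ≤ finrank ℝ F) (α : ℝ) {κ : ℝ}
    (hκ : 0 ≤ κ) :
    ∃ c > 0, ∀ (x₀ : F) (R : ℝ), 0 < R → ‖x₀‖ < κ * R →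
      ENNReal.ofReal (c * R ^ (α + finrank ℝ F)) ≤
        ∫⁻ y in ball x₀ R, ENNReal.ofReal (‖y‖ ^ α) ∂μ := by
  set m := min ((2 : ℝ)⁻¹ ^ α) ((κ + 1) ^ α)
  have hm : 0 < m := lt_min (by positivity) (by positivity)
  have hv : 0 < μ.real (ball 0 1) :=
    ENNReal.toReal_pos (measure_ball_pos μ 0 one_pos).ne' measure_ball_lt_top.ne
  refine ⟨m * μ.real (ball 0 1) / 2, by positivity, fun x₀ R hR hx₀ => ?_⟩
  set S := ball x₀ R \ ball 0 (R / 2)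
  have h_lower : ∀ y ∈ S, R ^ α * m ≤ ‖y‖ ^ α := by
    rintro y ⟨hy, hy'⟩
    have h_ge : R / 2 ≤ ‖y‖ := by simpa using hy'
    have h_le : ‖y‖ ≤ (κ + 1) * R :=
      (mem_ball_zero_iff.mp (ball_subset_ball_zero_of_norm_lt hx₀ hy)).le
    calc R ^ α * m = min ((R / 2) ^ α) (((κ + 1) * R) ^ α) := by
          rw [mul_min_of_nonneg _ _ (by positivity), div_eq_mul_inv, mul_rpow hR.le (by norm_num),
            mul_rpow (by positivity) hR.le, mul_comm ((κ + 1) ^ α)]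
      _ ≤ ‖y‖ ^ α := Real.min_rpow_le_rpow α (by positivity) h_ge h_le
  calc ENNReal.ofReal (m * μ.real (ball 0 1) / 2 * R ^ (α + finrank ℝ F))
      = ENNReal.ofReal (R ^ α * m) * (ENNReal.ofReal (R ^ finrank ℝ F / 2) * μ (ball 0 1)) := by
        rw [← ofReal_measureReal measure_ball_lt_top.ne, ← ENNReal.ofReal_mul (by positivity),
          ← ENNReal.ofReal_mul (by positivity), rpow_add hR, rpow_natCast]
        ring_nf
    _ ≤ ENNReal.ofReal (R ^ α * m) * μ S := by
        gcongr
        exact ofReal_pow_div_two_mul_addHaar_unitBall_le μ hd x₀ 0 hR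
    _ = ∫⁻ _ in S, ENNReal.ofReal (R ^ α * m) ∂μ := (setLIntegral_const _ _).symm
    _ ≤ ∫⁻ y in S, ENNReal.ofReal (‖y‖ ^ α) ∂μ :=
        setLIntegral_mono (by fun_prop) fun y hy => ENNReal.ofReal_le_ofReal (h_lower y hy)
    _ ≤ ∫⁻ y in ball x₀ R, ENNReal.ofReal (‖y‖ ^ α) ∂μ := lintegral_mono_set Set.sdiff_subset

theorem setLIntegral_unitBall_norm_rpow_pos (hd : 1 ≤ finrank ℝ F) (α : ℝ) :
    0 < ∫⁻ y in ball 0 1, ENNReal.ofReal (‖y‖ ^ α) ∂μ := by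
  obtain ⟨c, hc, h⟩ := exists_pos_le_setLIntegral_ball_norm_rpow μ hd α zero_le_one
  exact lt_of_lt_of_le (by simpa using hc) (h 0 1 one_pos (by simp))

theorem setLIntegral_ball_norm_rpow_le (α : ℝ) {κ R : ℝ} (hR : 0 < R) {x₀ : F}
    (hx₀ : ‖x₀‖ < κ * R) :
    ∫⁻ y in ball x₀ R, ENNReal.ofReal (‖y‖ ^ α) ∂μ ≤
      ENNReal.ofReal ((κ + 1) ^ (α + finrank ℝ F) * R ^ (α + finrank ℝ F)) *
        ∫⁻ y in ball 0 1, ENNReal.ofReal (‖y‖ ^ α) ∂μ := by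
  have hκ : 0 < κ := pos_of_mul_pos_left ((norm_nonneg x₀).trans_lt hx₀) hR.le
  calc ∫⁻ y in ball x₀ R, ENNReal.ofReal (‖y‖ ^ α) ∂μ
      ≤ ∫⁻ y in ball 0 ((κ + 1) * R), ENNReal.ofReal (‖y‖ ^ α) ∂μ :=
        lintegral_mono_set (ball_subset_ball_zero_of_norm_lt hx₀)
    _ = _ := by
        rw [setLIntegral_ball_zero_norm_rpow μ (by positivity), mul_rpow (by positivity) hR.le]

end AddHaar

theorem stmt18 (n : ℕ) (hn : 1 ≤ n) (α : ℝ) :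
    (∃ c : ℝ, 0 < c ∧ ∀ (x₀ : E n) (R : ℝ), 0 < R → ‖x₀‖ < 3 * R →
      ENNReal.ofReal (c * R ^ (α + n)) ≤
        ∫⁻ y in Metric.ball x₀ R, ENNReal.ofReal (‖y‖ ^ α)) ∧
    (-(n : ℝ) < α → ∃ C : ℝ, 0 < C ∧ ∀ (x₀ : E n) (R : ℝ), 0 < R → ‖x₀‖ < 3 * R →
      (∫⁻ y in Metric.ball x₀ R, ENNReal.ofReal (‖y‖ ^ α)) ≤
        ENNReal.ofReal (C * R ^ (α + n))) := by
  have hd : 1 ≤ finrank ℝ (E n) := by rwa [finrank_euclideanSpace_fin]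
  refine ⟨by simpa using exists_pos_le_setLIntegral_ball_norm_rpow volume hd α zero_le_three,
    fun hα => ?_⟩
  set I := ∫⁻ y in ball (0 : E n) 1, ENNReal.ofReal (‖y‖ ^ α)
  have hI_top : I ≠ ∞ :=
    (setLIntegral_unitBall_norm_rpow_lt_top volume hd (by simpa using hα)).ne
  have hI_pos : 0 < I.toReal :=
    ENNReal.toReal_pos (setLIntegral_unitBall_norm_rpow_pos volume hd α).ne' hI_top
  refine ⟨4 ^ (α + n) * I.toReal, by positivity, fun x₀ R hR hx₀ => ?_⟩
  calc ∫⁻ y in ball x₀ R, ENNReal.ofReal (‖y‖ ^ α)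
      ≤ ENNReal.ofReal (4 ^ (α + n) * R ^ (α + n)) * I := by
        simpa [show (3 : ℝ) + 1 = 4 by norm_num] using
          setLIntegral_ball_norm_rpow_le volume α hR hx₀
    _ = ENNReal.ofReal (4 ^ (α + n) * I.toReal * R ^ (α + n)) := by
        rw [← ENNReal.ofReal_toReal hI_top, ← ENNReal.ofReal_mul (by positivity),
          ENNReal.toReal_ofReal hI_pos.le]
        ring_nf
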